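/- arXiv:2510.09590 — 2 statements merged into one kernel-verified Lean document; each statement's English description precedes it below -/
import Mathlib

section
/- Let F_A and F_B be joint CDFs of random vectors with continuous joint densities supported on 𝒳×𝒵 = (−a₁,a₂)×[0,a₃), with marginals F¹_k and F²_k. Consider additive value functions v(x,z) = v₁(x) + v₂(z) where v₁: 𝒳 → ℝ is differentiable with v₁(−x) ≤ 0 ≤ v₁(x) for x>0, v₁' ≥ 0, and v₁'(−x) ≥ v₁'(x) for x>0, and v₂: 𝒵 → ℝ is differentiable with v₂' ≥ 0. Then W(F_A) ≥ W(F_B) for all such additive value functions if and only if: for all x ≥ 0, F¹_B(−x) − F¹_A(−x) ≥ max{0, F¹_A(x) − F¹_B(x)}, and for all z ∈ 𝒵, F²_A(z) ≤ F²_B(z). -/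
open MeasureTheory intervalIntegral Set

/-- Fubini swap for continuous integrands on rectangles. -/
lemma my_swap (f : ℝ → ℝ → ℝ) (hc : Continuous fun p : ℝ × ℝ => f p.1 p.2)
    {a b c d : ℝ} (hab : a ≤ b) (hcd : c ≤ d) :
    (∫ x in a..b, ∫ z in c..d, f x z) = ∫ z in c..d, ∫ x in a..b, f x z := by
  rw [intervalIntegral.integral_of_le hab, intervalIntegral.integral_of_le hcd]
  simp_rw [intervalIntegral.integral_of_le hcd, intervalIntegral.integral_of_le hab]
  apply MeasureTheory.integral_integral_swap
  rw [Measure.prod_restrict]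
  have h1 : IntegrableOn (fun p : ℝ × ℝ => f p.1 p.2) ((Icc a b) ×ˢ (Icc c d))
      ((volume : Measure ℝ).prod volume) :=
    hc.continuousOn.integrableOn_compact (isCompact_Icc.prod isCompact_Icc)
  exact h1.mono_set (Set.prod_mono Ioc_subset_Icc_self Ioc_subset_Icc_self)

/-- Integration by parts against a primitive. -/
lemma my_ibp (a b : ℝ) (g : ℝ → ℝ) (hg : Continuous g) (v : ℝ → ℝ)
    (hv : Differentiable ℝ v) (hint : IntervalIntegrable (deriv v) volume a b) :
    ∫ x in a..b, v x * g x
      = v b * (∫ t in a..b, g t) - ∫ x in a..b, deriv v x * (∫ t in a..x, g t) := by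
  have hF : ∀ x : ℝ, HasDerivAt (fun u => ∫ t in a..u, g t) (g x) x := fun x =>
    intervalIntegral.integral_hasDerivAt_right (hg.intervalIntegrable _ _)
      (hg.stronglyMeasurableAtFilter _ _) hg.continuousAt
  have h := intervalIntegral.integral_mul_deriv_eq_deriv_mul_of_hasDerivAt
    (u := v) (v := fun u => ∫ t in a..u, g t) (u' := deriv v) (v' := g)
    (a := a) (b := b)
    (hv.continuous.continuousOn)
    ((intervalIntegral.continuous_primitive (fun _ _ => hg.intervalIntegrable _ _) a).continuousOn)
    (fun x _ => (hv x).hasDerivAt)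
    (fun x _ => hF x)
    hint (hg.intervalIntegrable _ _)
  rw [h]; simp

/-- The key identity for W. -/
lemma W_eq (a₁ a₂ a₃ : ℝ) (ha₁ : 0 < a₁) (ha₂ : 0 < a₂) (ha₃ : 0 < a₃)
    (f : ℝ → ℝ → ℝ) (hc : Continuous fun p : ℝ × ℝ => f p.1 p.2)
    (hmass : (∫ x in (-a₁)..a₂, ∫ z in (0:ℝ)..a₃, f x z) = 1)
    (v₁ v₂ : ℝ → ℝ) (hv₁ : Differentiable ℝ v₁) (hv₂ : Differentiable ℝ v₂)
    (hi₁ : IntervalIntegrable (deriv v₁) volume (-a₁) a₂)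
    (hi₂ : IntervalIntegrable (deriv v₂) volume 0 a₃) :
    (∫ x in (-a₁)..a₂, ∫ z in (0:ℝ)..a₃, (v₁ x + v₂ z) * f x z)
      = v₁ a₂ + v₂ a₃
        - (∫ x in (-a₁)..a₂, deriv v₁ x * (∫ t in (-a₁)..x, ∫ s in (0:ℝ)..a₃, f t s))
        - ∫ z in (0:ℝ)..a₃, deriv v₂ z * (∫ t in (-a₁)..a₂, ∫ s in (0:ℝ)..z, f t s) := by
  have hab : (-a₁ : ℝ) ≤ a₂ := by linarith
  have hcd : (0:ℝ) ≤ a₃ := le_of_lt ha₃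
  set g : ℝ → ℝ := fun x => ∫ z in (0:ℝ)..a₃, f x z with hg_def
  set h : ℝ → ℝ := fun z => ∫ x in (-a₁)..a₂, f x z with hh_def
  have hg : Continuous g :=
    continuous_parametric_intervalIntegral_of_continuous' (f := f) hc 0 a₃
  have hh : Continuous h :=
    continuous_parametric_intervalIntegral_of_continuous'
      (f := fun z x => f x z) (hc.comp continuous_swap) (-a₁) a₂
  have hq : Continuous fun x => ∫ z in (0:ℝ)..a₃, v₂ z * f x z :=
    continuous_parametric_intervalIntegral_of_continuous'
      (f := fun x z => v₂ z * f x z)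
      ((hv₂.continuous.comp continuous_snd).mul hc) 0 a₃
  have stepA : ∀ x : ℝ, (∫ z in (0:ℝ)..a₃, (v₁ x + v₂ z) * f x z)
      = v₁ x * g x + ∫ z in (0:ℝ)..a₃, v₂ z * f x z := by
    intro x
    have h1 : IntervalIntegrable (fun z => v₁ x * f x z) volume 0 a₃ :=
      (continuous_const.mul (hc.comp (Continuous.prodMk_right x))).intervalIntegrable _ _
    have h2 : IntervalIntegrable (fun z => v₂ z * f x z) volume 0 a₃ :=
      (hv₂.continuous.mul (hc.comp (Continuous.prodMk_right x))).intervalIntegrable _ _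
    have : (∫ z in (0:ℝ)..a₃, (v₁ x + v₂ z) * f x z)
        = ∫ z in (0:ℝ)..a₃, (v₁ x * f x z + v₂ z * f x z) := by
      congr 1; ext z; ring
    rw [this, intervalIntegral.integral_add h1 h2, intervalIntegral.integral_const_mul]
  have stepB : (∫ x in (-a₁)..a₂, ∫ z in (0:ℝ)..a₃, (v₁ x + v₂ z) * f x z)
      = (∫ x in (-a₁)..a₂, v₁ x * g x)
          + ∫ x in (-a₁)..a₂, ∫ z in (0:ℝ)..a₃, v₂ z * f x z := by
    simp_rw [stepA]
    exact intervalIntegral.integral_add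
      ((hv₁.continuous.mul hg).intervalIntegrable _ _) (hq.intervalIntegrable _ _)
  have stepC : (∫ x in (-a₁)..a₂, ∫ z in (0:ℝ)..a₃, v₂ z * f x z)
      = ∫ z in (0:ℝ)..a₃, v₂ z * h z := by
    rw [my_swap (fun x z => v₂ z * f x z)
      ((hv₂.continuous.comp continuous_snd).mul hc) hab hcd]
    simp_rw [intervalIntegral.integral_const_mul]
    rfl
  rw [stepB, stepC]
  have ibp1 := my_ibp (-a₁) a₂ g hg v₁ hv₁ hi₁
  have ibp2 := my_ibp 0 a₃ h hh v₂ hv₂ hi₂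
  have hm1 : (∫ t in (-a₁)..a₂, g t) = 1 := hmass
  have hm2 : (∫ t in (0:ℝ)..a₃, h t) = 1 := by
    rw [hh_def]; rw [← my_swap f hc hab hcd]; exact hmass
  have hF2 : (∫ z in (0:ℝ)..a₃, deriv v₂ z * (∫ s in (0:ℝ)..z, h s))
      = ∫ z in (0:ℝ)..a₃, deriv v₂ z * (∫ t in (-a₁)..a₂, ∫ s in (0:ℝ)..z, f t s) := by
    apply intervalIntegral.integral_congr
    intro z hz
    rw [Set.uIcc_of_le hcd] at hz
    simp only []
    congr 1
    rw [my_swap f hc hab hz.1]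
  rw [ibp1, ibp2, hm1, hm2, ← hF2]
  ring

/-- Localization of an integral at the support. -/
lemma my_loc (φ D : ℝ → ℝ) (hφ : Continuous φ) (hD : Continuous D) {a b α β : ℝ}
    (h1 : a ≤ α) (h2 : α ≤ β) (h3 : β ≤ b) (h0 : ∀ t, t ∉ Set.Ioo α β → φ t = 0) :
    (∫ t in a..b, φ t * D t) = ∫ t in α..β, φ t * D t := by
  have hint : ∀ u v : ℝ, IntervalIntegrable (fun t => φ t * D t) volume u v := fun u v =>
    (hφ.mul hD).intervalIntegrable _ _
  have e1 : (∫ t in a..α, φ t * D t) = 0 := by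
    have : EqOn (fun t => φ t * D t) (fun _ => (0:ℝ)) (Set.uIcc a α) := by
      intro t ht
      rw [Set.uIcc_of_le h1] at ht
      have : φ t = 0 := h0 t (fun hmem => absurd hmem.1 (not_lt.mpr ht.2))
      simp [this]
    rw [intervalIntegral.integral_congr this]; simp
  have e2 : (∫ t in β..b, φ t * D t) = 0 := by
    have : EqOn (fun t => φ t * D t) (fun _ => (0:ℝ)) (Set.uIcc β b) := by
      intro t ht
      rw [Set.uIcc_of_le h3] at ht
      have : φ t = 0 := h0 t (fun hmem => absurd hmem.2 (not_lt.mpr ht.1))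
      simp [this]
    rw [intervalIntegral.integral_congr this]; simp
  rw [← intervalIntegral.integral_add_adjacent_intervals (hint a α) (hint α b),
    ← intervalIntegral.integral_add_adjacent_intervals (hint α β) (hint β b), e1, e2]
  ring

/-- Pointwise nonnegativity from integrals against bump functions. -/
lemma D_nonneg_at (D : ℝ → ℝ) (hD : Continuous D) (a b α β x₀ : ℝ)
    (haα : a ≤ α) (hβb : β ≤ b) (hx₀ : x₀ ∈ Set.Ioo α β)
    (H : ∀ φ : ℝ → ℝ, Continuous φ → (∀ t, 0 ≤ φ t) →
      (∀ t, t ∉ Set.Ioo α β → φ t = 0) → 0 ≤ ∫ t in a..b, φ t * D t) :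
    0 ≤ D x₀ := by
  by_contra hneg
  push_neg at hneg
  have hε : (0:ℝ) < -(D x₀) / 2 := by linarith
  obtain ⟨δ₁, hδ₁pos, hδ₁⟩ := Metric.continuousAt_iff.mp hD.continuousAt _ hε
  set δ := min δ₁ (min (x₀ - α) (β - x₀)) / 2 with hδ_def
  have hδpos : 0 < δ := by
    apply div_pos _ (by norm_num)
    exact lt_min hδ₁pos (lt_min (by linarith [hx₀.1]) (by linarith [hx₀.2]))
  have hδ₁' : δ < δ₁ := by
    have : δ ≤ δ₁ / 2 := by
      apply div_le_div_of_nonneg_right _ (by norm_num)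
      exact min_le_left _ _
    linarith
  have hδα : α < x₀ - δ := by
    have : δ ≤ (x₀ - α) / 2 := by
      apply div_le_div_of_nonneg_right _ (by norm_num)
      exact le_trans (min_le_right _ _) (min_le_left _ _)
    have h2 : 0 < x₀ - α := by linarith [hx₀.1]
    linarith
  have hδβ : x₀ + δ < β := by
    have : δ ≤ (β - x₀) / 2 := by
      apply div_le_div_of_nonneg_right _ (by norm_num)
      exact le_trans (min_le_right _ _) (min_le_right _ _)
    have h2 : 0 < β - x₀ := by linarith [hx₀.2]
    linarith
  set bump : ContDiffBump x₀ := ⟨δ/2, δ, by positivity, by linarith⟩ with hbump_def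
  set φ : ℝ → ℝ := fun t => bump t with hφ_def
  have hφc : Continuous φ := bump.continuous
  have hφ0 : ∀ t, 0 ≤ φ t := fun t => bump.nonneg
  have hsupp : ∀ t, t ∉ Set.Ioo (x₀ - δ) (x₀ + δ) → φ t = 0 := by
    intro t ht
    by_contra hne
    have : t ∈ Function.support φ := hne
    rw [hφ_def] at this
    have : t ∈ Metric.ball x₀ δ := by
      have hs := bump.support_eq
      rw [show Function.support (fun t => bump t) = Function.support bump from rfl] at this
      rw [hs] at this
      exact this
    rw [Real.ball_eq_Ioo] at this
    exact ht this
  have hsupp' : ∀ t, t ∉ Set.Ioo α β → φ t = 0 := fun t ht =>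
    hsupp t (fun hmem => ht ⟨by linarith [hmem.1], by linarith [hmem.2]⟩)
  have hHφ := H φ hφc hφ0 hsupp'
  have hloc : (∫ t in a..b, φ t * D t) = ∫ t in (x₀-δ)..(x₀+δ), φ t * D t :=
    my_loc φ D hφc hD (by linarith) (by linarith) (by linarith) hsupp
  -- upper bound
  have hptw : ∀ t ∈ Set.Icc (x₀ - δ) (x₀ + δ), φ t * D t ≤ φ t * (D x₀ / 2) := by
    intro t ht
    apply mul_le_mul_of_nonneg_left _ (hφ0 t)
    have hdist : dist t x₀ < δ₁ := by
      rw [Real.dist_eq]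
      rw [abs_lt]
      constructor <;> [linarith [ht.1, hδ₁']; linarith [ht.2, hδ₁']]
    have := hδ₁ hdist
    rw [Real.dist_eq, abs_lt] at this
    linarith [this.1, this.2]
  have hmono : (∫ t in (x₀-δ)..(x₀+δ), φ t * D t)
      ≤ ∫ t in (x₀-δ)..(x₀+δ), φ t * (D x₀ / 2) := by
    apply intervalIntegral.integral_mono_on (by linarith)
      ((hφc.mul hD).intervalIntegrable _ _)
      ((hφc.mul continuous_const).intervalIntegrable _ _) hptw
  have hφpos : 0 < ∫ t in (x₀-δ)..(x₀+δ), φ t := by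
    apply intervalIntegral.intervalIntegral_pos_of_pos_on (hφc.intervalIntegrable _ _)
    · intro t ht
      apply bump.pos_of_mem_ball
      rw [Real.ball_eq_Ioo]
      exact ht
    · linarith
  have hconst : (∫ t in (x₀-δ)..(x₀+δ), φ t * (D x₀ / 2))
      = (∫ t in (x₀-δ)..(x₀+δ), φ t) * (D x₀ / 2) := by
    rw [← intervalIntegral.integral_mul_const]
  have : (∫ t in (x₀-δ)..(x₀+δ), φ t) * (D x₀ / 2) < 0 :=
    mul_neg_of_pos_of_neg hφpos (by linarith)
  rw [hloc] at hHφ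
  rw [hconst] at hmono
  linarith

/-- nonneg on closure -/
lemma nonneg_closure (D : ℝ → ℝ) (hD : Continuous D) (s : Set ℝ)
    (h : ∀ x ∈ s, 0 ≤ D x) : ∀ x ∈ closure s, 0 ≤ D x := fun x hx =>
  closure_minimal h (isClosed_le continuous_const hD) hx

/-- zero marginal below the support -/
lemma F1_left (a₁ a₂ a₃ : ℝ) (f : ℝ → ℝ → ℝ)
    (hsupp : ∀ x z, f x z ≠ 0 → x ∈ Set.Ioo (-a₁) a₂ ∧ z ∈ Set.Ico 0 a₃)
    {x : ℝ} (hx : x ≤ -a₁) :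
    (∫ t in (-a₁)..x, ∫ s in (0:ℝ)..a₃, f t s) = 0 := by
  have : EqOn (fun t => ∫ s in (0:ℝ)..a₃, f t s) (fun _ => (0:ℝ)) (Set.uIcc (-a₁) x) := by
    intro t ht
    rw [Set.uIcc_comm, Set.uIcc_of_le hx] at ht
    have hz : ∀ s, f t s = 0 := by
      intro s
      by_contra hne
      exact absurd (hsupp t s hne).1.1 (not_lt.mpr ht.2)
    simp only []
    rw [intervalIntegral.integral_congr (g := fun _ => (0:ℝ)) (fun s _ => hz s)]
    simp
  rw [intervalIntegral.integral_congr this]; simp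

/-- full marginal above the support -/
lemma F1_right (a₁ a₂ a₃ : ℝ) (f : ℝ → ℝ → ℝ)
    (hc : Continuous fun p : ℝ × ℝ => f p.1 p.2)
    (hsupp : ∀ x z, f x z ≠ 0 → x ∈ Set.Ioo (-a₁) a₂ ∧ z ∈ Set.Ico 0 a₃)
    (hmass : (∫ x in (-a₁)..a₂, ∫ z in (0:ℝ)..a₃, f x z) = 1)
    {x : ℝ} (hx : a₂ ≤ x) :
    (∫ t in (-a₁)..x, ∫ s in (0:ℝ)..a₃, f t s) = 1 := by
  have hg : Continuous fun t => ∫ s in (0:ℝ)..a₃, f t s :=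
    continuous_parametric_intervalIntegral_of_continuous' (f := f) hc 0 a₃
  have e2 : (∫ t in a₂..x, ∫ s in (0:ℝ)..a₃, f t s) = 0 := by
    have : EqOn (fun t => ∫ s in (0:ℝ)..a₃, f t s) (fun _ => (0:ℝ)) (Set.uIcc a₂ x) := by
      intro t ht
      rw [Set.uIcc_of_le hx] at ht
      have hz : ∀ s, f t s = 0 := by
        intro s
        by_contra hne
        exact absurd (hsupp t s hne).1.2 (not_lt.mpr ht.1)
      simp only []
      rw [intervalIntegral.integral_congr (g := fun _ => (0:ℝ)) (fun s _ => hz s)]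
      simp
    rw [intervalIntegral.integral_congr this]; simp
  rw [← intervalIntegral.integral_add_adjacent_intervals (b := a₂)
    (hg.intervalIntegrable _ _) (hg.intervalIntegrable _ _), hmass, e2]
  ring

lemma prim_hasDeriv (ψ : ℝ → ℝ) (hψ : Continuous ψ) (x : ℝ) :
    HasDerivAt (fun u => ∫ t in (0:ℝ)..u, ψ t) (ψ x) x :=
  intervalIntegral.integral_hasDerivAt_right (hψ.intervalIntegrable _ _)
    (hψ.stronglyMeasurableAtFilter _ _) hψ.continuousAt

lemma prim_diff (ψ : ℝ → ℝ) (hψ : Continuous ψ) :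
    Differentiable ℝ (fun u => ∫ t in (0:ℝ)..u, ψ t) :=
  fun x => (prim_hasDeriv ψ hψ x).differentiableAt

lemma prim_deriv (ψ : ℝ → ℝ) (hψ : Continuous ψ) :
    deriv (fun u => ∫ t in (0:ℝ)..u, ψ t) = ψ :=
  funext fun x => (prim_hasDeriv ψ hψ x).deriv

lemma prim_nonneg (ψ : ℝ → ℝ) (h0 : ∀ t, 0 ≤ ψ t) {x : ℝ} (hx : 0 ≤ x) :
    0 ≤ ∫ t in (0:ℝ)..x, ψ t :=
  intervalIntegral.integral_nonneg hx (fun u _ => h0 u)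

lemma prim_nonpos (ψ : ℝ → ℝ) (h0 : ∀ t, 0 ≤ ψ t) {x : ℝ} (hx : x ≤ 0) :
    (∫ t in (0:ℝ)..x, ψ t) ≤ 0 := by
  rw [intervalIntegral.integral_symm]
  have : 0 ≤ ∫ t in x..(0:ℝ), ψ t := intervalIntegral.integral_nonneg hx (fun u _ => h0 u)
  linarith

lemma zero_deriv : deriv (fun _ : ℝ => (0:ℝ)) = fun _ => (0:ℝ) :=
  funext fun x => deriv_const x 0

lemma intInt_eqOn_zero (f : ℝ → ℝ) (a b : ℝ) (h : ∀ t ∈ Set.uIcc a b, f t = 0) :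
    IntervalIntegrable f volume a b ∧ (∫ t in a..b, f t) = 0 := by
  constructor
  · constructor
    · apply (integrableOn_congr_fun (g := f) (f := fun _ => (0:ℝ)) ?_ measurableSet_Ioc).mp
        (integrableOn_zero)
      intro t ht
      exact (h t (Set.Icc_subset_uIcc (Set.Ioc_subset_Icc_self ht))).symm
    · apply (integrableOn_congr_fun (g := f) (f := fun _ => (0:ℝ)) ?_ measurableSet_Ioc).mp
        (integrableOn_zero)
      intro t ht
      exact (h t (Set.Icc_subset_uIcc' (Set.Ioc_subset_Icc_self ht))).symm
  · rw [intervalIntegral.integral_congr (g := fun _ => (0:ℝ)) h]; simp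

set_option maxHeartbeats 2000000 in
theorem lasbd_additive_equiv
    (a₁ a₂ a₃ : ℝ) (ha₁ : 0 < a₁) (ha₂ : 0 < a₂) (ha₃ : 0 < a₃)
    (fA fB : ℝ → ℝ → ℝ) (FA FB : ℝ → ℝ → ℝ) (F1A F1B F2A F2B : ℝ → ℝ)
    (hfA_cont : Continuous fun p : ℝ × ℝ => fA p.1 p.2)
    (hfB_cont : Continuous fun p : ℝ × ℝ => fB p.1 p.2)
    (hfA_nonneg : ∀ x z, 0 ≤ fA x z) (hfB_nonneg : ∀ x z, 0 ≤ fB x z)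
    (hfA_supp : ∀ x z, fA x z ≠ 0 → x ∈ Set.Ioo (-a₁) a₂ ∧ z ∈ Set.Ico 0 a₃)
    (hfB_supp : ∀ x z, fB x z ≠ 0 → x ∈ Set.Ioo (-a₁) a₂ ∧ z ∈ Set.Ico 0 a₃)
    (hfA_mass : (∫ x in (-a₁)..a₂, ∫ z in (0:ℝ)..a₃, fA x z) = 1)
    (hfB_mass : (∫ x in (-a₁)..a₂, ∫ z in (0:ℝ)..a₃, fB x z) = 1)
    (hFA : ∀ x z, FA x z = ∫ t in (-a₁)..x, ∫ s in (0:ℝ)..z, fA t s)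
    (hFB : ∀ x z, FB x z = ∫ t in (-a₁)..x, ∫ s in (0:ℝ)..z, fB t s)
    (hF1A : ∀ x, F1A x = FA x a₃) (hF1B : ∀ x, F1B x = FB x a₃)
    (hF2A : ∀ z, F2A z = FA a₂ z) (hF2B : ∀ z, F2B z = FB a₂ z) :
    (∀ v₁ v₂ : ℝ → ℝ,
        Differentiable ℝ v₁ → Differentiable ℝ v₂ →
        (∀ x, 0 < x → x ∈ Set.Ioo (-a₁) a₂ → -x ∈ Set.Ioo (-a₁) a₂ →
            v₁ (-x) ≤ 0 ∧ 0 ≤ v₁ x) →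
        (∀ x ∈ Set.Ioo (-a₁) a₂, 0 ≤ deriv v₁ x) →
        (∀ x, 0 < x → x ∈ Set.Ioo (-a₁) a₂ → -x ∈ Set.Ioo (-a₁) a₂ →
            deriv v₁ x ≤ deriv v₁ (-x)) →
        (∀ z ∈ Set.Ico 0 a₃, 0 ≤ deriv v₂ z) →
        (∫ x in (-a₁)..a₂, ∫ z in (0:ℝ)..a₃, (v₁ x + v₂ z) * fB x z)
          ≤ ∫ x in (-a₁)..a₂, ∫ z in (0:ℝ)..a₃, (v₁ x + v₂ z) * fA x z)
      ↔ ((∀ x : ℝ, 0 ≤ x → max 0 (F1A x - F1B x) ≤ F1B (-x) - F1A (-x)) ∧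
       (∀ z ∈ Set.Ico (0:ℝ) a₃, F2A z ≤ F2B z)) := by
  have hab : (-a₁ : ℝ) ≤ a₂ := by linarith
  have hcd : (0:ℝ) ≤ a₃ := le_of_lt ha₃
  have hG1A : Continuous fun x : ℝ => ∫ t in (-a₁)..x, ∫ s in (0:ℝ)..a₃, fA t s := by fun_prop
  have hG1B : Continuous fun x : ℝ => ∫ t in (-a₁)..x, ∫ s in (0:ℝ)..a₃, fB t s := by fun_prop
  have hG2A : Continuous fun z : ℝ => ∫ t in (-a₁)..a₂, ∫ s in (0:ℝ)..z, fA t s := by fun_prop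
  have hG2B : Continuous fun z : ℝ => ∫ t in (-a₁)..a₂, ∫ s in (0:ℝ)..z, fB t s := by fun_prop
  set G1A : ℝ → ℝ := fun x => ∫ t in (-a₁)..x, ∫ s in (0:ℝ)..a₃, fA t s with hG1A_def
  set G1B : ℝ → ℝ := fun x => ∫ t in (-a₁)..x, ∫ s in (0:ℝ)..a₃, fB t s with hG1B_def
  set G2A : ℝ → ℝ := fun z => ∫ t in (-a₁)..a₂, ∫ s in (0:ℝ)..z, fA t s with hG2A_def
  set G2B : ℝ → ℝ := fun z => ∫ t in (-a₁)..a₂, ∫ s in (0:ℝ)..z, fB t s with hG2B_def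
  have hF1A' : ∀ x, F1A x = G1A x := fun x => by rw [hF1A, hFA]
  have hF1B' : ∀ x, F1B x = G1B x := fun x => by rw [hF1B, hFB]
  have hF2A' : ∀ z, F2A z = G2A z := fun z => by rw [hF2A, hFA]
  have hF2B' : ∀ z, F2B z = G2B z := fun z => by rw [hF2B, hFB]
  set D1 : ℝ → ℝ := fun x => G1B x - G1A x with hD1_def
  set D2 : ℝ → ℝ := fun z => G2B z - G2A z with hD2_def
  set E : ℝ → ℝ := fun x => D1 x + D1 (-x) with hE_def
  have hD1 : Continuous D1 := hG1B.sub hG1A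
  have hD2 : Continuous D2 := hG2B.sub hG2A
  have hE : Continuous E := hD1.add (hD1.comp continuous_neg)
  -- boundary values
  have hD1_left : ∀ y : ℝ, y ≤ -a₁ → D1 y = 0 := by
    intro y hy
    rw [hD1_def]
    simp only [hG1B_def, hG1A_def]
    rw [F1_left a₁ a₂ a₃ fB hfB_supp hy, F1_left a₁ a₂ a₃ fA hfA_supp hy]
    ring
  have hD1_right : ∀ y : ℝ, a₂ ≤ y → D1 y = 0 := by
    intro y hy
    rw [hD1_def]
    simp only [hG1B_def, hG1A_def]
    rw [F1_right a₁ a₂ a₃ fB hfB_cont hfB_supp hfB_mass hy,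
      F1_right a₁ a₂ a₃ fA hfA_cont hfA_supp hfA_mass hy]
    ring
  have hD2_top : D2 a₃ = 0 := by
    rw [hD2_def]
    simp only [hG2B_def, hG2A_def]
    rw [hfB_mass, hfA_mass]
    ring
  -- the equivalent formulation of the W inequality
  have W_iff : ∀ v₁ v₂ : ℝ → ℝ, Differentiable ℝ v₁ → Differentiable ℝ v₂ →
      IntervalIntegrable (deriv v₁) volume (-a₁) a₂ →
      IntervalIntegrable (deriv v₂) volume 0 a₃ →
      (((∫ x in (-a₁)..a₂, ∫ z in (0:ℝ)..a₃, (v₁ x + v₂ z) * fB x z)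
          ≤ ∫ x in (-a₁)..a₂, ∫ z in (0:ℝ)..a₃, (v₁ x + v₂ z) * fA x z)
        ↔ ((∫ x in (-a₁)..a₂, deriv v₁ x * G1A x) + (∫ z in (0:ℝ)..a₃, deriv v₂ z * G2A z)
          ≤ (∫ x in (-a₁)..a₂, deriv v₁ x * G1B x) + ∫ z in (0:ℝ)..a₃, deriv v₂ z * G2B z)) := by
    intro v₁ v₂ hv₁ hv₂ hi₁ hi₂
    rw [W_eq a₁ a₂ a₃ ha₁ ha₂ ha₃ fA hfA_cont hfA_mass v₁ v₂ hv₁ hv₂ hi₁ hi₂,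
      W_eq a₁ a₂ a₃ ha₁ ha₂ ha₃ fB hfB_cont hfB_mass v₁ v₂ hv₁ hv₂ hi₁ hi₂]
    constructor <;> intro h <;> [linarith; linarith]
  constructor
  · -- forward direction
    intro hW
    -- case z
    have hz : ∀ z₀ ∈ Set.Ioo (0:ℝ) a₃, 0 ≤ D2 z₀ := by
      intro z₀ hz₀
      apply D_nonneg_at D2 hD2 0 a₃ 0 a₃ z₀ le_rfl le_rfl hz₀
      intro φ hφc hφ0 hφsupp
      have hv₂d := prim_diff φ hφc
      have hv₂' := prim_deriv φ hφc
      have hWapp := hW (fun _ => 0) (fun u => ∫ t in (0:ℝ)..u, φ t)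
        (differentiable_const 0) hv₂d
        (fun x _ _ _ => ⟨le_rfl, le_rfl⟩)
        (fun x _ => by simp)
        (fun x _ _ _ => by simp)
        (fun z _ => by rw [hv₂']; exact hφ0 z)
      have hiff := W_iff (fun _ => 0) (fun u => ∫ t in (0:ℝ)..u, φ t)
        (differentiable_const 0) hv₂d
        (by rw [zero_deriv]; exact intervalIntegrable_const)
        (by rw [hv₂']; exact hφc.intervalIntegrable _ _)
      rw [hiff] at hWapp
      simp only [hv₂', zero_deriv, zero_mul, intervalIntegral.integral_zero, zero_add] at hWapp
      have e : (fun t => φ t * D2 t) = fun t => φ t * G2B t - φ t * G2A t := by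
        funext t; simp only [hD2_def]; ring
      rw [e, intervalIntegral.integral_sub (f := fun t => φ t * G2B t) (g := fun t => φ t * G2A t) ((hφc.mul hG2B).intervalIntegrable _ _)
        ((hφc.mul hG2A).intervalIntegrable _ _)]
      linarith
    -- case x negative
    have hneg : ∀ y ∈ Set.Ioo (-a₁) (0:ℝ), 0 ≤ D1 y := by
      intro y hy
      apply D_nonneg_at D1 hD1 (-a₁) a₂ (-a₁) 0 y le_rfl (by linarith) hy
      intro φ hφc hφ0 hφsupp
      have hvd := prim_diff φ hφc
      have hv' := prim_deriv φ hφc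
      have hWapp := hW (fun u => ∫ t in (0:ℝ)..u, φ t) (fun _ => 0) hvd
        (differentiable_const 0)
        (fun x hx _ _ => ⟨prim_nonpos φ hφ0 (by linarith), prim_nonneg φ hφ0 (le_of_lt hx)⟩)
        (fun x _ => by rw [hv']; exact hφ0 x)
        (fun x hx _ _ => by
          rw [hv']
          rw [hφsupp x (fun hmem => absurd hmem.2 (not_lt.mpr (le_of_lt hx)))]
          exact hφ0 (-x))
        (fun z _ => by simp)
      have hiff := W_iff (fun u => ∫ t in (0:ℝ)..u, φ t) (fun _ => 0) hvd
        (differentiable_const 0)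
        (by rw [hv']; exact hφc.intervalIntegrable _ _)
        (by rw [zero_deriv]; exact intervalIntegrable_const)
      rw [hiff] at hWapp
      simp only [hv', zero_deriv, zero_mul, intervalIntegral.integral_zero, add_zero] at hWapp
      have e : (fun t => φ t * D1 t) = fun t => φ t * G1B t - φ t * G1A t := by
        funext t; simp only [hD1_def]; ring
      rw [e, intervalIntegral.integral_sub (f := fun t => φ t * G1B t) (g := fun t => φ t * G1A t) ((hφc.mul hG1B).intervalIntegrable _ _)
        ((hφc.mul hG1A).intervalIntegrable _ _)]
      linarith
    -- case x positive, between a₁ and a₂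
    have hpos : ∀ x ∈ Set.Ioo a₁ a₂, 0 ≤ D1 x := by
      intro x hx
      apply D_nonneg_at D1 hD1 (-a₁) a₂ a₁ a₂ x (by linarith) le_rfl hx
      intro φ hφc hφ0 hφsupp
      have hvd := prim_diff φ hφc
      have hv' := prim_deriv φ hφc
      have hWapp := hW (fun u => ∫ t in (0:ℝ)..u, φ t) (fun _ => 0) hvd
        (differentiable_const 0)
        (fun x hx _ _ => ⟨prim_nonpos φ hφ0 (by linarith), prim_nonneg φ hφ0 (le_of_lt hx)⟩)
        (fun x _ => by rw [hv']; exact hφ0 x)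
        (fun x' hx' hmem2 hmem3 => by
          rw [hv']
          rw [hφsupp x' (fun hmem => absurd hmem.1 (by linarith [hmem3.1]))]
          exact hφ0 (-x'))
        (fun z _ => by simp)
      have hiff := W_iff (fun u => ∫ t in (0:ℝ)..u, φ t) (fun _ => 0) hvd
        (differentiable_const 0)
        (by rw [hv']; exact hφc.intervalIntegrable _ _)
        (by rw [zero_deriv]; exact intervalIntegrable_const)
      rw [hiff] at hWapp
      simp only [hv', zero_deriv, zero_mul, intervalIntegral.integral_zero, add_zero] at hWapp
      have e : (fun t => φ t * D1 t) = fun t => φ t * G1B t - φ t * G1A t := by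
        funext t; simp only [hD1_def]; ring
      rw [e, intervalIntegral.integral_sub (f := fun t => φ t * G1B t) (g := fun t => φ t * G1A t) ((hφc.mul hG1B).intervalIntegrable _ _)
        ((hφc.mul hG1A).intervalIntegrable _ _)]
      linarith
    -- case x symmetric
    set m := min a₁ a₂ with hm_def
    have hma : m ≤ a₁ := min_le_left _ _
    have hmb : m ≤ a₂ := min_le_right _ _
    have hm0 : 0 < m := lt_min ha₁ ha₂
    have hsym : ∀ x ∈ Set.Ioo (0:ℝ) m, 0 ≤ E x := by
      intro x hx
      apply D_nonneg_at E hE (-m) m 0 m x (by linarith) le_rfl hx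
      intro φ hφc hφ0 hφsupp
      set ψ : ℝ → ℝ := fun t => φ t + φ (-t) with hψ_def
      have hψc : Continuous ψ := hφc.add (hφc.comp continuous_neg)
      have hψ0 : ∀ t, 0 ≤ ψ t := fun t => add_nonneg (hφ0 t) (hφ0 (-t))
      have hvd := prim_diff ψ hψc
      have hv' := prim_deriv ψ hψc
      have hψsupp : ∀ t, t ∉ Set.Ioo (-m) m → ψ t = 0 := by
        intro t ht
        have h1 : φ t = 0 := by
          apply hφsupp
          intro hmem
          exact ht ⟨by linarith [hmem.1], hmem.2⟩
        have h2 : φ (-t) = 0 := by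
          apply hφsupp
          intro hmem
          apply ht
          constructor <;> [linarith [hmem.2]; linarith [hmem.1]]
        simp only [hψ_def, h1, h2, add_zero]
      have hWapp := hW (fun u => ∫ t in (0:ℝ)..u, ψ t) (fun _ => 0) hvd
        (differentiable_const 0)
        (fun x hx _ _ => ⟨prim_nonpos ψ hψ0 (by linarith), prim_nonneg ψ hψ0 (le_of_lt hx)⟩)
        (fun x _ => by rw [hv']; exact hψ0 x)
        (fun x hx _ _ => by
          rw [hv']
          apply le_of_eq
          simp only [hψ_def, neg_neg]
          ring)
        (fun z _ => by simp)
      have hiff := W_iff (fun u => ∫ t in (0:ℝ)..u, ψ t) (fun _ => 0) hvd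
        (differentiable_const 0)
        (by rw [hv']; exact hψc.intervalIntegrable _ _)
        (by rw [zero_deriv]; exact intervalIntegrable_const)
      rw [hiff] at hWapp
      simp only [hv', zero_deriv, zero_mul, intervalIntegral.integral_zero, add_zero] at hWapp
      have key : 0 ≤ ∫ t in (-a₁)..a₂, ψ t * D1 t := by
        have e : (fun t => ψ t * D1 t) = fun t => ψ t * G1B t - ψ t * G1A t := by
          funext t; simp only [hD1_def]; ring
        rw [e, intervalIntegral.integral_sub (f := fun t => ψ t * G1B t) (g := fun t => ψ t * G1A t) ((hψc.mul hG1B).intervalIntegrable _ _)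
          ((hψc.mul hG1A).intervalIntegrable _ _)]
        linarith
      have l1 : (∫ t in (-a₁)..a₂, ψ t * D1 t) = ∫ t in (-m)..m, ψ t * D1 t :=
        my_loc ψ D1 hψc hD1 (by linarith) (by linarith) (by linarith) hψsupp
      have c1 : Continuous fun t : ℝ => φ (-t) * D1 t := (hφc.comp continuous_neg).mul hD1
      have c2 : Continuous fun t : ℝ => φ t * D1 (-t) := hφc.mul (hD1.comp continuous_neg)
      have l2 : (∫ t in (-m)..m, ψ t * D1 t)
          = (∫ t in (-m)..m, φ t * D1 t) + ∫ t in (-m)..m, φ (-t) * D1 t := by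
        rw [← intervalIntegral.integral_add (f := fun t => φ t * D1 t) (g := fun t => φ (-t) * D1 t) ((hφc.mul hD1).intervalIntegrable _ _)
          (c1.intervalIntegrable _ _)]
        apply intervalIntegral.integral_congr
        intro t _
        simp only [hψ_def]
        ring
      have l3 : (∫ t in (-m)..m, φ (-t) * D1 t) = ∫ t in (-m)..m, φ t * D1 (-t) := by
        have h := intervalIntegral.integral_comp_neg (a := -m) (b := m)
          (f := fun s => φ s * D1 (-s))
        simp only [neg_neg] at h
        exact h
      have l4 : (∫ t in (-m)..m, φ t * D1 t) + (∫ t in (-m)..m, φ t * D1 (-t))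
          = ∫ t in (-m)..m, φ t * E t := by
        rw [← intervalIntegral.integral_add (f := fun t => φ t * D1 t) (g := fun t => φ t * D1 (-t)) ((hφc.mul hD1).intervalIntegrable _ _)
          (c2.intervalIntegrable _ _)]
        apply intervalIntegral.integral_congr
        intro t _
        simp only [hE_def]
        ring
      rw [← l4, ← l3, ← l2, ← l1]
      exact key
    -- closures
    have hnegc : ∀ y ∈ Set.Icc (-a₁) (0:ℝ), 0 ≤ D1 y := by
      intro y hy
      apply nonneg_closure D1 hD1 (Set.Ioo (-a₁) 0) hneg
      rw [closure_Ioo (by linarith : (-a₁ : ℝ) ≠ 0)]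
      exact hy
    have hsymc : ∀ x ∈ Set.Icc (0:ℝ) m, 0 ≤ E x := by
      intro x hx
      apply nonneg_closure E hE (Set.Ioo 0 m) hsym
      rw [closure_Ioo (by linarith : (0:ℝ) ≠ m)]
      exact hx
    have hzc : ∀ z ∈ Set.Icc (0:ℝ) a₃, 0 ≤ D2 z := by
      intro z hzz
      apply nonneg_closure D2 hD2 (Set.Ioo 0 a₃) hz
      rw [closure_Ioo (by linarith : (0:ℝ) ≠ a₃)]
      exact hzz
    -- assemble claims
    have claimA : ∀ x : ℝ, 0 ≤ x → 0 ≤ D1 (-x) := by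
      intro x hx
      by_cases h : x ≤ a₁
      · exact hnegc (-x) ⟨by linarith, by linarith⟩
      · rw [hD1_left (-x) (by linarith)]
    have claimB : ∀ x : ℝ, 0 ≤ x → 0 ≤ D1 x + D1 (-x) := by
      intro x hx
      by_cases hxm : x ≤ m
      · have := hsymc x ⟨hx, hxm⟩
        simp only [hE_def] at this
        exact this
      · push_neg at hxm
        by_cases hx2 : a₂ ≤ x
        · have e1 : D1 x = 0 := hD1_right x hx2
          have e2 := claimA x hx
          linarith
        · push_neg at hx2
          have hax : a₁ < x := by
            rcases le_total a₁ a₂ with hle | hle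
            · rw [min_eq_left hle] at hm_def
              rw [hm_def] at hxm
              exact hxm
            · rw [min_eq_right hle] at hm_def
              rw [hm_def] at hxm
              linarith
          have e1 := hpos x ⟨hax, hx2⟩
          have e2 : D1 (-x) = 0 := hD1_left (-x) (by linarith)
          linarith
    refine ⟨?_, ?_⟩
    · intro x hx
      rw [max_le_iff]
      have eB : F1B (-x) - F1A (-x) = D1 (-x) := by rw [hF1B' (-x), hF1A' (-x)]
      have eA : F1A x - F1B x = -(D1 x) := by rw [hF1B' x, hF1A' x]; ring
      constructor
      · rw [eB]
        exact claimA x hx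
      · rw [eA, eB]
        have := claimB x hx
        linarith
    · intro z hzz
      have e : F2B z - F2A z = D2 z := by rw [hF2B' z, hF2A' z]
      have := hzc z ⟨hzz.1, le_of_lt hzz.2⟩
      linarith
  · -- backward direction
    rintro ⟨h1, h2⟩
    intro v₁ v₂ hv₁ hv₂ hsign hder₁ hpair hder₂
    have hi₁ : IntervalIntegrable (deriv v₁) volume (-a₁) a₂ := by
      apply intervalIntegral.intervalIntegrable_deriv_of_nonneg hv₁.continuous.continuousOn
        (fun x _ => (hv₁ x).hasDerivAt)
      intro x hx
      rw [min_eq_left hab, max_eq_right hab] at hx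
      exact hder₁ x hx
    have hi₂ : IntervalIntegrable (deriv v₂) volume 0 a₃ := by
      apply intervalIntegral.intervalIntegrable_deriv_of_nonneg hv₂.continuous.continuousOn
        (fun x _ => (hv₂ x).hasDerivAt)
      intro x hx
      rw [min_eq_left hcd, max_eq_right hcd] at hx
      exact hder₂ x ⟨le_of_lt hx.1, hx.2⟩
    rw [W_iff v₁ v₂ hv₁ hv₂ hi₁ hi₂]
    have hcondA : ∀ x : ℝ, 0 ≤ x → 0 ≤ D1 (-x) := by
      intro x hx
      have h := h1 x hx
      rw [max_le_iff] at h
      have e : F1B (-x) - F1A (-x) = D1 (-x) := by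
        rw [hF1B' (-x), hF1A' (-x)]
      linarith [h.1]
    have hcondE : ∀ x : ℝ, 0 ≤ x → 0 ≤ D1 x + D1 (-x) := by
      intro x hx
      have h := h1 x hx
      rw [max_le_iff] at h
      have e : F1B (-x) - F1A (-x) = D1 (-x) := by rw [hF1B' (-x), hF1A' (-x)]
      have e2 : F1A x - F1B x = -(D1 x) := by rw [hF1B' x, hF1A' x]; ring
      linarith [h.2]
    have hcond2 : ∀ z, 0 ≤ z → z < a₃ → 0 ≤ D2 z := by
      intro z hz hz'
      have h := h2 z ⟨hz, hz'⟩
      have e : F2B z - F2A z = D2 z := by rw [hF2B' z, hF2A' z]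
      linarith
    have hzpart : 0 ≤ ∫ z in (0:ℝ)..a₃, deriv v₂ z * D2 z := by
      apply intervalIntegral.integral_nonneg hcd
      intro u hu
      rcases lt_or_eq_of_le hu.2 with h3 | h3
      · exact mul_nonneg (hder₂ u ⟨hu.1, h3⟩) (hcond2 u hu.1 h3)
      · rw [h3, hD2_top, mul_zero]
    set M := max a₁ a₂ with hM_def
    have hMa : a₁ ≤ M := le_max_left _ _
    have hMb : a₂ ≤ M := le_max_right _ _
    have hM0 : 0 < M := lt_of_lt_of_le ha₁ hMa
    have int_mid : IntervalIntegrable (fun t => deriv v₁ t * D1 t) volume (-a₁) a₂ :=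
      hi₁.mul_continuousOn hD1.continuousOn
    have left0 := intInt_eqOn_zero (fun t => deriv v₁ t * D1 t) (-M) (-a₁)
      (by
        intro t ht
        rw [Set.uIcc_of_le (by linarith : -M ≤ -a₁)] at ht
        show deriv v₁ t * D1 t = 0
        rw [hD1_left t ht.2, mul_zero])
    have right0 := intInt_eqOn_zero (fun t => deriv v₁ t * D1 t) a₂ M
      (by
        intro t ht
        rw [Set.uIcc_of_le hMb] at ht
        show deriv v₁ t * D1 t = 0
        rw [hD1_right t ht.1, mul_zero])
    have ext1 : (∫ t in (-a₁)..a₂, deriv v₁ t * D1 t) = ∫ t in (-M)..M, deriv v₁ t * D1 t := by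
      rw [← intervalIntegral.integral_add_adjacent_intervals (left0.1.trans int_mid) right0.1,
        ← intervalIntegral.integral_add_adjacent_intervals left0.1 int_mid, left0.2, right0.2]
      ring
    have intMM : IntervalIntegrable (fun t => deriv v₁ t * D1 t) volume (-M) M :=
      (left0.1.trans int_mid).trans right0.1
    have int_l : IntervalIntegrable (fun t => deriv v₁ t * D1 t) volume (-M) 0 :=
      intMM.mono_set (by
        rw [Set.uIcc_of_le (by linarith : -M ≤ (0:ℝ)), Set.uIcc_of_le (by linarith : -M ≤ M)]
        exact Set.Icc_subset_Icc le_rfl (by linarith))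
    have int_r : IntervalIntegrable (fun t => deriv v₁ t * D1 t) volume 0 M :=
      intMM.mono_set (by
        rw [Set.uIcc_of_le (le_of_lt hM0), Set.uIcc_of_le (by linarith : -M ≤ M)]
        exact Set.Icc_subset_Icc (by linarith) le_rfl)
    have split : (∫ t in (-M)..M, deriv v₁ t * D1 t)
        = (∫ t in (-M)..(0:ℝ), deriv v₁ t * D1 t) + ∫ t in (0:ℝ)..M, deriv v₁ t * D1 t :=
      (intervalIntegral.integral_add_adjacent_intervals int_l int_r).symm
    have reflect : (∫ t in (-M)..(0:ℝ), deriv v₁ t * D1 t)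
        = ∫ t in (0:ℝ)..M, deriv v₁ (-t) * D1 (-t) := by
      rw [intervalIntegral.integral_comp_neg (a := 0) (b := M)
        (f := fun t => deriv v₁ t * D1 t)]
      norm_num
    have int_refl : IntervalIntegrable (fun t => deriv v₁ (-t) * D1 (-t)) volume 0 M := by
      have h := (IntervalIntegrable.iff_comp_neg (f := fun t => deriv v₁ t * D1 t) (a := -M) (b := 0)).mp int_l
      rw [neg_neg, neg_zero] at h
      exact h.symm
    have combine : (∫ t in (0:ℝ)..M, deriv v₁ (-t) * D1 (-t)) + (∫ t in (0:ℝ)..M, deriv v₁ t * D1 t)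
        = ∫ t in (0:ℝ)..M, (deriv v₁ (-t) * D1 (-t) + deriv v₁ t * D1 t) :=
      (intervalIntegral.integral_add int_refl int_r).symm
    have hxpart : 0 ≤ ∫ x in (-a₁)..a₂, deriv v₁ x * D1 x := by
      rw [ext1, split, reflect, combine]
      apply intervalIntegral.integral_nonneg (le_of_lt hM0)
      intro t ht
      by_cases h2' : t < a₂
      · by_cases h1' : t < a₁
        · rcases eq_or_lt_of_le ht.1 with h0 | h0
          · have hmem : (0:ℝ) ∈ Set.Ioo (-a₁) a₂ := ⟨by linarith, ha₂⟩
            have hd := hder₁ 0 hmem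
            have hDpos := hcondA 0 le_rfl
            rw [neg_zero] at hDpos
            rw [← h0, neg_zero]
            nlinarith [hd, hDpos]
          · have hmem : t ∈ Set.Ioo (-a₁) a₂ := ⟨by linarith, h2'⟩
            have hmem' : -t ∈ Set.Ioo (-a₁) a₂ := ⟨by linarith, by linarith⟩
            have ha := hder₁ t hmem
            have hb := hpair t h0 hmem hmem'
            have hc := hcondA t ht.1
            have hd := hcondE t ht.1
            nlinarith [mul_nonneg (sub_nonneg.mpr hb) hc, mul_nonneg ha hd]
        · push_neg at h1'
          rw [hD1_left (-t) (by linarith)]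
          have hmem : t ∈ Set.Ioo (-a₁) a₂ := ⟨by linarith, h2'⟩
          have ha := hder₁ t hmem
          have hDt : 0 ≤ D1 t := by
            have he := hcondE t ht.1
            have hz := hD1_left (-t) (by linarith : -t ≤ -a₁)
            linarith
          nlinarith [mul_nonneg ha hDt]
      · push_neg at h2'
        rw [hD1_right t h2']
        by_cases h1' : t < a₁
        · have hmem' : -t ∈ Set.Ioo (-a₁) a₂ := ⟨by linarith, by linarith⟩
          have ha := hder₁ (-t) hmem'
          have hc := hcondA t ht.1
          nlinarith [mul_nonneg ha hc]
        · push_neg at h1'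
          rw [hD1_left (-t) (by linarith)]
          simp
    have s1 : (∫ x in (-a₁)..a₂, deriv v₁ x * G1B x)
        = (∫ x in (-a₁)..a₂, deriv v₁ x * G1A x) + ∫ x in (-a₁)..a₂, deriv v₁ x * D1 x := by
      rw [← intervalIntegral.integral_add (hi₁.mul_continuousOn hG1A.continuousOn)
        (hi₁.mul_continuousOn hD1.continuousOn)]
      apply intervalIntegral.integral_congr
      intro x _
      simp only [hD1_def]
      ring
    have s2 : (∫ z in (0:ℝ)..a₃, deriv v₂ z * G2B z)
        = (∫ z in (0:ℝ)..a₃, deriv v₂ z * G2A z) + ∫ z in (0:ℝ)..a₃, deriv v₂ z * D2 z := by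
      rw [← intervalIntegral.integral_add (hi₂.mul_continuousOn hG2A.continuousOn)
        (hi₂.mul_continuousOn hD2.continuousOn)]
      apply intervalIntegral.integral_congr
      intro z _
      simp only [hD2_def]
      ring
    rw [s1, s2]
    linarith
end

section
/- Let (S, μ) be a measure space, let f: S → ℝ be measurable with f(s) ≤ 0 for all s, and let h: S → ℝ be measurable with max{h,0} ∈ L²(μ). Writing [g]_+ = max{g, 0} pointwise and ‖·‖ for the L²(μ) norm, and letting χ₀ be the indicator function of the set {s : f(s) = 0}, one has lim_{t → 0⁺} t^{−1} ( ‖[f + t·h]_+‖ − ‖[f]_+‖ ) = ‖[h·χ₀]_+‖; in particular the map g ↦ ‖[g]_+‖ is Hadamard directionally differentiable at f in the direction h with derivative ‖[h·χ₀]_+‖. -/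
open MeasureTheory

theorem pos_part_L2_norm_hadamard_directional_derivative
    {S : Type*} [MeasurableSpace S] (μ : Measure S)
    (f h : S → ℝ) (hf_meas : Measurable f) (hh_meas : Measurable h)
    (hf_nonpos : ∀ s, f s ≤ 0)
    (hh_L2 : MemLp (fun s => max (h s) 0) 2 μ) :
    Filter.Tendsto
      (fun t : ℝ =>
        t⁻¹ * (Real.sqrt (∫ s, max (f s + t * h s) 0 ^ 2 ∂μ)
                - Real.sqrt (∫ s, max (f s) 0 ^ 2 ∂μ)))
      (nhdsWithin 0 (Set.Ioi 0))
      (nhds (Real.sqrt (∫ s, max (Set.indicator {s' | f s' = 0} h s) 0 ^ 2 ∂μ))) := by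
  have hf0 : ∀ s, max (f s) 0 = 0 := fun s => max_eq_right (hf_nonpos s)
  have hA0 : (∫ s, max (f s) 0 ^ 2 ∂μ) = 0 := by simp [hf0]
  have hbound : Integrable (fun s => max (h s) 0 ^ 2) μ := hh_L2.integrable_sq
  have key : Filter.Tendsto (fun t : ℝ => ∫ s, max (f s / t + h s) 0 ^ 2 ∂μ)
      (nhdsWithin 0 (Set.Ioi 0))
      (nhds (∫ s, max (Set.indicator {s' | f s' = 0} h s) 0 ^ 2 ∂μ)) := by
    apply tendsto_integral_filter_of_dominated_convergence (fun s => max (h s) 0 ^ 2)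
    · filter_upwards with t
      exact ((((hf_meas.div_const t).add hh_meas).max measurable_const).pow_const
        2).aestronglyMeasurable
    · filter_upwards [self_mem_nhdsWithin] with t ht
      refine Filter.Eventually.of_forall fun s => ?_
      have hd : f s / t ≤ 0 := div_nonpos_of_nonpos_of_nonneg (hf_nonpos s) (le_of_lt ht)
      have h1 : max (f s / t + h s) 0 ≤ max (h s) 0 := max_le_max (by linarith) le_rfl
      rw [Real.norm_eq_abs, abs_of_nonneg (by positivity)]
      exact pow_le_pow_left₀ (le_max_right _ _) h1 2
    · exact hbound
    · refine Filter.Eventually.of_forall fun s => ?_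
      by_cases hfs : f s = 0
      · have : (fun t : ℝ => max (f s / t + h s) 0 ^ 2) =
            fun _ : ℝ => max (h s) 0 ^ 2 := by
          funext t; simp [hfs]
        rw [this, Set.indicator_of_mem (show s ∈ {s' | f s' = 0} from hfs)]
        exact tendsto_const_nhds
      · have hfs' : f s < 0 := lt_of_le_of_ne (hf_nonpos s) hfs
        rw [Set.indicator_of_notMem (show s ∉ {s' | f s' = 0} from hfs)]
        have h0 : (max (0:ℝ) 0) ^ 2 = 0 := by norm_num
        rw [h0]
        have htop : Filter.Tendsto (fun t : ℝ => f s / t + h s)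
            (nhdsWithin 0 (Set.Ioi 0)) Filter.atBot := by
          apply Filter.tendsto_atBot_add_const_right
          have := (Filter.tendsto_const_mul_atBot_of_neg (f := fun t : ℝ => t⁻¹)
            (l := nhdsWithin 0 (Set.Ioi 0)) hfs').2 tendsto_inv_nhdsGT_zero
          exact this.congr fun t => (div_eq_mul_inv (f s) t).symm
        refine Filter.Tendsto.congr' ?_ (tendsto_const_nhds :
          Filter.Tendsto (fun _ : ℝ => (0:ℝ)) _ _)
        filter_upwards [htop.eventually (Filter.eventually_le_atBot 0)] with t ht
        rw [max_eq_right ht]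
        simp
  have key2 := (Real.continuous_sqrt.tendsto _).comp key
  refine key2.congr' ?_
  filter_upwards [self_mem_nhdsWithin] with t ht
  have ht0 : (0:ℝ) < t := ht
  have heq : ∀ s, max (f s / t + h s) 0 ^ 2 = (t⁻¹) ^ 2 * max (f s + t * h s) 0 ^ 2 := by
    intro s
    have h1 : f s / t + h s = t⁻¹ * (f s + t * h s) := by field_simp
    rw [h1, show (t⁻¹ * (f s + t * h s) ⊔ 0) = t⁻¹ * ((f s + t * h s) ⊔ 0) from by
      rw [mul_max_of_nonneg _ _ (inv_nonneg.2 ht0.le), mul_zero], mul_pow]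
  simp only [Function.comp, heq, hA0, Real.sqrt_zero, sub_zero]
  rw [integral_const_mul, Real.sqrt_mul (sq_nonneg _),
    Real.sqrt_sq (inv_nonneg.2 ht0.le)]
end
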